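/- Let n, m ≥ 2 and let F : ℝ₊ⁿ → Sₘ be continuously differentiable, convex and monotonically non-increasing. Let x ∈ ℝ₊ⁿ be such that F'(x)((n−1)e_j' − e_j) ⋠ 0 for all j ∈ {1,…,n}. Then for every y ∈ ℝ₊ⁿ with y ≠ x: F(y) ⪯ F(x) implies Σ_{j=1}ⁿ (y_j − x_j) > 0. -/

import Mathlib

/-!
If `F y ⪯ F x`, convexity gives `F'(x)(y - x) ⪯ 0`. Suppose `∑ (y_j - x_j) ≤ 0` with `y ≠ x` and
let `j` minimise `d = y - x`. Then `d_j < 0`, and since the other `n - 1` entries sum to at least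
`(n - 1) d_j`, every `d_i ≤ (n - 1)(-d_j)`; hence `d / (-d_j) ≤ (n - 1) e_j' - e_j` entrywise.
As `F'(x)` is antitone, `F'(x)((n - 1) e_j' - e_j) ⪯ F'(x)(d) / (-d_j) ⪯ 0`.
-/

attribute [local instance] Matrix.frobeniusNormedAddCommGroup Matrix.frobeniusNormedSpace

noncomputable section

/-- The open positive orthant `ℝ₊ⁿ` in `ℝⁿ`. -/
def posOrth (n : ℕ) : Set (Fin n → ℝ) := {x | ∀ i, 0 < x i}

/-- The Loewner order on real matrices: `A ⪯ B` iff `B - A` is positive semidefinite. -/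
def loewnerLE {m : ℕ} (A B : Matrix (Fin m) (Fin m) ℝ) : Prop := (B - A).PosSemidef

/-- The largest eigenvalue `λ_max` of a real (symmetric) matrix. -/
noncomputable def lambdaMax {m : ℕ} (A : Matrix (Fin m) (Fin m) ℝ) : ℝ :=
  sSup {r : ℝ | ∃ v : Fin m → ℝ, v ≠ 0 ∧ A.mulVec v = r • v}

/-- The spectral norm `‖·‖₂` of a real matrix (operator norm on Euclidean space). -/
noncomputable def matSpectralNorm {m : ℕ} (A : Matrix (Fin m) (Fin m) ℝ) : ℝ :=
  ‖LinearMap.toContinuousLinearMap (Matrix.toEuclideanLin A)‖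

/-- `e_j`, the `j`-th standard unit vector of `ℝⁿ`. -/
def unitVec (n : ℕ) (j : Fin n) : Fin n → ℝ := Pi.single j 1

/-- `e_j' = 𝟙 - e_j`. -/
def coVec (n : ℕ) (j : Fin n) : Fin n → ℝ := (fun _ => (1:ℝ)) - Pi.single j 1

/-- The direction `(n-1) e_j' - e_j`. -/
noncomputable def dirVec (n : ℕ) (j : Fin n) : Fin n → ℝ :=
  ((n:ℝ) - 1) • coVec n j - unitVec n j

/-- `z_{j,k} = (a/2) e_j' + (a + k·a/(4(n-1))) e_j`. -/
noncomputable def zVec (n : ℕ) (a : ℝ) (j : Fin n) (k : ℤ) : Fin n → ℝ :=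
  (a/2) • coVec n j + (a + (k:ℝ) * a / (4 * ((n:ℝ) - 1))) • unitVec n j

/-- `d_j = ((2b-a)/a)(n-1) e_j' - (1/2) e_j`. -/
noncomputable def dVec (n : ℕ) (a b : ℝ) (j : Fin n) : Fin n → ℝ :=
  ((2*b - a)/a * ((n:ℝ) - 1)) • coVec n j - (1/2 : ℝ) • unitVec n j

/-- `K = ⌈4(n-1)b/a⌉ - 4n - 3`. -/
noncomputable def Kbound (n : ℕ) (a b : ℝ) : ℤ := ⌈4 * ((n:ℝ) - 1) * b / a⌉ - 4 * (n:ℤ) - 3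

open scoped MatrixOrder

theorem loewnerLE_iff_le {m : ℕ} {A B : Matrix (Fin m) (Fin m) ℝ} : loewnerLE A B ↔ A ≤ B :=
  Iff.rfl

theorem le_neg_mul_of_sum_nonpos {ι : Type*} [Fintype ι] {d : ι → ℝ} (hsum : ∑ i, d i ≤ 0)
    {j : ι} (hj : ∀ i, d j ≤ d i) (i : ι) :
    d i ≤ -((Fintype.card ι - 1 : ℝ) * d j) := by
  classical
  have hrest : ((Fintype.card ι - 1 : ℕ) : ℝ) * d j ≤ ∑ k ∈ Finset.univ.erase i, d k := by
    simpa [Finset.card_erase_of_mem] using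
      Finset.card_nsmul_le_sum (Finset.univ.erase i) d (d j) fun k _ => hj k
  rw [Nat.cast_pred (Fintype.card_pos_iff.2 ⟨i⟩)] at hrest
  linarith [Finset.add_sum_erase Finset.univ d (Finset.mem_univ i)]

theorem dirVec_apply (n : ℕ) (j i : Fin n) :
    dirVec n j i = if i = j then -1 else (n : ℝ) - 1 := by
  by_cases h : i = j <;> simp [dirVec, coVec, unitVec, h]

theorem exists_smul_le_dirVec_of_sum_nonpos {n : ℕ} {d : Fin n → ℝ} (hd : d ≠ 0)
    (hsum : ∑ i, d i ≤ 0) : ∃ j, ∃ c : ℝ, 0 ≤ c ∧ c • d ≤ dirVec n j := by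
  obtain ⟨i₀, -⟩ := Function.ne_iff.1 hd
  have : Nonempty (Fin n) := ⟨i₀⟩
  obtain ⟨j, hj⟩ := Finite.exists_min d
  have hneg : d j < 0 := by
    by_contra! h
    have hnonneg : 0 ≤ d := fun i => h.trans (hj i)
    exact hd ((Fintype.sum_eq_zero_iff_of_nonneg hnonneg).1
      (hsum.antisymm (Fintype.sum_nonneg hnonneg)))
  refine ⟨j, -(d j)⁻¹, by simpa using hneg.le, fun i => ?_⟩
  have hbound := le_neg_mul_of_sum_nonpos hsum hj i
  rw [Fintype.card_fin] at hbound
  rw [Pi.smul_apply, smul_eq_mul, dirVec_apply]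
  split_ifs with h
  · subst h
    simp [hneg.ne]
  · rw [neg_mul, ← div_eq_inv_mul, neg_le, le_div_iff_of_neg hneg]
    linarith

theorem converse_monotonicity_general {n m : ℕ}
    (F : (Fin n → ℝ) → Matrix (Fin m) (Fin m) ℝ)
    (F' : (Fin n → ℝ) → (Fin n → ℝ) →L[ℝ] Matrix (Fin m) (Fin m) ℝ)
    (hmono : ∀ x ∈ posOrth n, ∀ d : Fin n → ℝ, 0 ≤ d → loewnerLE (F' x d) 0)
    (hconv : ∀ x ∈ posOrth n, ∀ x₀ ∈ posOrth n, loewnerLE (F' x₀ (x - x₀)) (F x - F x₀))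
    (x : Fin n → ℝ) (hx : x ∈ posOrth n)
    (hcrit : ∀ j : Fin n, ¬ loewnerLE (F' x (dirVec n j)) 0) :
    ∀ y ∈ posOrth n, y ≠ x → loewnerLE (F y) (F x) → 0 < ∑ j, (y j - x j) := by
  intro y hy hyx hle
  by_contra! hsum
  obtain ⟨j, c, hc, hcd⟩ := exists_smul_le_dirVec_of_sum_nonpos (sub_ne_zero.2 hyx)
    (by simpa [Finset.sum_sub_distrib] using hsum)
  have hanti : Antitone (F' x) := (antitone_iff_map_nonpos (F' x)).2 (hmono x hx)
  have hdescent : F' x (y - x) ≤ 0 :=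
    loewnerLE_iff_le.1 (hconv y hy x hx) |>.trans (sub_nonpos.2 hle)
  refine hcrit j (loewnerLE_iff_le.2 ((hanti hcd).trans ?_))
  rw [map_smul]
  exact smul_nonpos_of_nonneg_of_nonpos hc hdescent

/-- Remark 1, converse monotonicity. If `F'(x)((n-1)e_j' - e_j) ⋠ 0` for all
`j`, then for every `y ∈ ℝ₊ⁿ` with `y ≠ x`, `F(y) ⪯ F(x)` implies `∑ (y_j - x_j) > 0`. -/
theorem converse_monotonicity {n m : ℕ} (hn : 2 ≤ n) (hm : 2 ≤ m)
    (F : (Fin n → ℝ) → Matrix (Fin m) (Fin m) ℝ)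
    (F' : (Fin n → ℝ) → (Fin n → ℝ) →L[ℝ] Matrix (Fin m) (Fin m) ℝ)
    (hF_symm : ∀ x ∈ posOrth n, (F x).IsSymm)
    (hF'_symm : ∀ x ∈ posOrth n, ∀ d : Fin n → ℝ, (F' x d).IsSymm)
    (hderiv : ∀ x ∈ posOrth n, HasFDerivAt F (F' x) x)
    (hcont : ContinuousOn F' (posOrth n))
    (hmono : ∀ x ∈ posOrth n, ∀ d : Fin n → ℝ, 0 ≤ d → loewnerLE (F' x d) 0)
    (hconv : ∀ x ∈ posOrth n, ∀ x₀ ∈ posOrth n, loewnerLE (F' x₀ (x - x₀)) (F x - F x₀))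
    (x : Fin n → ℝ) (hx : x ∈ posOrth n)
    (hcrit : ∀ j : Fin n, ¬ loewnerLE (F' x (dirVec n j)) 0) :
    ∀ y ∈ posOrth n, y ≠ x → loewnerLE (F y) (F x) → 0 < ∑ j, (y j - x j) :=
  converse_monotonicity_general F F' hmono hconv x hx hcrit

end
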